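/- arXiv:1007.4796 — 6 statements merged into one kernel-verified Lean document; each statement's English description precedes it below -/
import Mathlib

section
/- Let V' be the set consisting of 0 together with all nonzero v in V with ρ(v) ≠ 0, where ρ is a reciprocal map from V \ {0} to a field k. Then V' is an F_q-linear subspace of V. -/
/-- A reciprocal map `ρ : V \ {0} → k` (formalized as a function on `V` whose values at `0`
are irrelevant): it satisfies `ρ(αv) = α⁻¹ ρ(v)` for `α ∈ 𝔽_q^×`, and
`ρ(v)ρ(v') = ρ(v+v')(ρ(v)+ρ(v'))` whenever `v`, `v'`, `v+v'` are all nonzero. -/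
def IsReciprocal (𝔽 : Type*) {V k : Type*} [Field 𝔽] [AddCommGroup V] [Module 𝔽 V]
    [Field k] [Algebra 𝔽 k] (ρ : V → k) : Prop :=
  (∀ (v : V), v ≠ 0 → ∀ (α : 𝔽), α ≠ 0 → ρ (α • v) = (algebraMap 𝔽 k α)⁻¹ * ρ v) ∧
  (∀ (v v' : V), v ≠ 0 → v' ≠ 0 → v + v' ≠ 0 →
    ρ v * ρ v' = ρ (v + v') * (ρ v + ρ v'))

namespace IsReciprocal

variable {𝔽 V k : Type*} [Field 𝔽] [AddCommGroup V] [Module 𝔽 V] [Field k] [Algebra 𝔽 k]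
  {ρ : V → k}

theorem map_smul_ne_zero (hρ : IsReciprocal 𝔽 ρ) {v : V} (hv : v ≠ 0) {α : 𝔽} (hα : α ≠ 0)
    (h : ρ v ≠ 0) : ρ (α • v) ≠ 0 := by
  rw [hρ.1 v hv α hα]
  exact mul_ne_zero (inv_ne_zero ((map_ne_zero _).2 hα)) h

theorem map_add_ne_zero (hρ : IsReciprocal 𝔽 ρ) {v v' : V} (hv : v ≠ 0) (hv' : v' ≠ 0)
    (hvv' : v + v' ≠ 0) (h : ρ v ≠ 0) (h' : ρ v' ≠ 0) : ρ (v + v') ≠ 0 := by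
  intro hsum
  have hprod := hρ.2 v v' hv hv' hvv'
  rw [hsum, zero_mul] at hprod
  exact mul_ne_zero h h' hprod

/-- The paper's `V'`. -/
def supportSubmodule (hρ : IsReciprocal 𝔽 ρ) : Submodule 𝔽 V where
  carrier := {v | v ≠ 0 → ρ v ≠ 0}
  zero_mem' h := absurd rfl h
  add_mem' {v v'} hv hv' hvv' := by
    rcases eq_or_ne v 0 with rfl | hv0
    · simpa using hv' (by simpa using hvv')
    rcases eq_or_ne v' 0 with rfl | hv'0
    · simpa using hv hv0
    exact hρ.map_add_ne_zero hv0 hv'0 hvv' (hv hv0) (hv' hv'0)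
  smul_mem' α v hv hαv := by
    obtain ⟨hα, hv0⟩ := smul_ne_zero_iff.1 hαv
    exact hρ.map_smul_ne_zero hv0 hα (hv hv0)

theorem coe_supportSubmodule (hρ : IsReciprocal 𝔽 ρ) :
    (hρ.supportSubmodule : Set V) = {0} ∪ {v : V | v ≠ 0 ∧ ρ v ≠ 0} := by
  ext v
  by_cases hv : v = 0 <;> simp [supportSubmodule, hv]

end IsReciprocal

theorem support_of_reciprocal_is_subspace_general (𝔽 V k : Type*) [Field 𝔽]
    [AddCommGroup V] [Module 𝔽 V] [Field k] [Algebra 𝔽 k]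
    (ρ : V → k) (hρ : IsReciprocal 𝔽 ρ) :
    ∃ V' : Submodule 𝔽 V, (V' : Set V) = {0} ∪ {v : V | v ≠ 0 ∧ ρ v ≠ 0} :=
  ⟨hρ.supportSubmodule, hρ.coe_supportSubmodule⟩

/-- The set consisting of `0` together with all nonzero `v ∈ V` with `ρ(v) ≠ 0`, where `ρ` is a
reciprocal map into a field `k`, is an `𝔽_q`-linear subspace of `V`. -/
theorem support_of_reciprocal_is_subspace (𝔽 V k : Type*) [Field 𝔽] [Fintype 𝔽]
    [AddCommGroup V] [Module 𝔽 V] [FiniteDimensional 𝔽 V] [Field k] [Algebra 𝔽 k]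
    (hchar : ringChar k = ringChar 𝔽)
    (ρ : V → k) (hρ : IsReciprocal 𝔽 ρ) :
    ∃ V' : Submodule 𝔽 V, (V' : Set V) = {0} ∪ {v : V | v ≠ 0 ∧ ρ v ≠ 0} :=
  support_of_reciprocal_is_subspace_general 𝔽 V k ρ hρ
end

section
/- If ρ: V \ {0} → k is a reciprocal map into a field and ρ(v) ≠ 0 for all nonzero v (ρ is invertible), then the map λ: V → k defined by λ(0) = 0 and λ(v) = ρ(v)^{-1} for v ≠ 0 is F_q-linear. -/
/-!
Inverting the reciprocity relation `ρ v * ρ v' = ρ (v + v') * (ρ v + ρ v')` turns it into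
`(ρ (v + v'))⁻¹ = (ρ v)⁻¹ + (ρ v')⁻¹`, and the scaling rule `ρ (α • v) = α⁻¹ * ρ v` into
`(ρ (α • v))⁻¹ = α * (ρ v)⁻¹`. The only case not covered by these is `v' = -v`, handled by
`ρ (-v) = -ρ v` (scaling by `-1`).
-/

namespace IsReciprocal

variable {𝔽 V k : Type*} [Field 𝔽] [AddCommGroup V] [Module 𝔽 V] [Field k] [Algebra 𝔽 k]
  {ρ : V → k}

theorem map_neg (hρ : IsReciprocal 𝔽 ρ) {v : V} (hv : v ≠ 0) : ρ (-v) = -ρ v := by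
  simpa using hρ.1 v hv (-1) (by norm_num)

theorem inv_map_add (hρ : IsReciprocal 𝔽 ρ) {v v' : V} (hv : v ≠ 0) (hv' : v' ≠ 0)
    (hvv : v + v' ≠ 0) (hρv : ρ v ≠ 0) (hρv' : ρ v' ≠ 0) (hρvv : ρ (v + v') ≠ 0) :
    (ρ (v + v'))⁻¹ = (ρ v)⁻¹ + (ρ v')⁻¹ := by
  field_simp
  linear_combination hρ.2 v v' hv hv' hvv

theorem inv_map_smul (hρ : IsReciprocal 𝔽 ρ) {v : V} (hv : v ≠ 0) {α : 𝔽} (hα : α ≠ 0) :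
    (ρ (α • v))⁻¹ = algebraMap 𝔽 k α * (ρ v)⁻¹ := by
  rw [hρ.1 v hv α hα, mul_inv, inv_inv]

end IsReciprocal

theorem invertible_reciprocal_gives_linear_general (𝔽 V k : Type*) [Field 𝔽]
    [AddCommGroup V] [Module 𝔽 V] [Field k] [Algebra 𝔽 k]
    (ρ : V → k) (hρ : IsReciprocal 𝔽 ρ) (hinv : ∀ v : V, v ≠ 0 → ρ v ≠ 0) :
    IsLinearMap 𝔽 (fun v : V => open scoped Classical in if v = 0 then 0 else (ρ v)⁻¹) := by
  refine ⟨fun v v' => ?_, fun α v => ?_⟩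
  · rcases eq_or_ne v 0 with rfl | hv
    · rw [zero_add, if_pos rfl, zero_add]
    rcases eq_or_ne v' 0 with rfl | hv'
    · rw [add_zero, if_pos rfl, add_zero]
    rcases eq_or_ne (v + v') 0 with hvv | hvv
    · rw [eq_neg_of_add_eq_zero_right hvv]
      simp [hv, hρ.map_neg hv]
    · simp only [if_neg hv, if_neg hv', if_neg hvv]
      exact hρ.inv_map_add hv hv' hvv (hinv v hv) (hinv v' hv') (hinv _ hvv)
  · rcases eq_or_ne v 0 with rfl | hv
    · simp
    rcases eq_or_ne α 0 with rfl | hα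
    · simp
    simp only [if_neg hv, if_neg (smul_ne_zero hα hv), hρ.inv_map_smul hv hα, Algebra.smul_def]

/-- If `ρ : V \ {0} → k` is an invertible reciprocal map into a field containing `𝔽_q`,
then `λ : V → k` with `λ(0) = 0` and `λ(v) = ρ(v)⁻¹` for `v ≠ 0` is `𝔽_q`-linear. -/
theorem invertible_reciprocal_gives_linear (𝔽 V k : Type*) [Field 𝔽] [Fintype 𝔽]
    [AddCommGroup V] [Module 𝔽 V] [FiniteDimensional 𝔽 V] [Field k] [Algebra 𝔽 k]
    (ρ : V → k) (hρ : IsReciprocal 𝔽 ρ) (hinv : ∀ v : V, v ≠ 0 → ρ v ≠ 0) :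
    IsLinearMap 𝔽 (fun v : V => open scoped Classical in if v = 0 then 0 else (ρ v)⁻¹) :=
  invertible_reciprocal_gives_linear_general 𝔽 V k ρ hρ hinv
end

section
/- Let i: V' ↪ V be the inclusion of a nonzero F_q-subspace and ρ: V' \ {0} → k a reciprocal map. Then the extension by zero i_*ρ: V \ {0} → k, defined by (i_*ρ)(v) = ρ(v) if v ∈ V' and 0 otherwise, is again a reciprocal map. -/
namespace Submodule

variable {𝔽 V k : Type*} [Field 𝔽] [AddCommGroup V] [Module 𝔽 V] [Field k]
  (V' : Submodule 𝔽 V) (ρ : V' → k)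

open scoped Classical in
noncomputable def extendByZero (v : V) : k :=
  if h : v ∈ V' then ρ ⟨v, h⟩ else 0

variable {V' ρ}

theorem extendByZero_of_mem {v : V} (h : v ∈ V') : V'.extendByZero ρ v = ρ ⟨v, h⟩ :=
  dif_pos h

theorem extendByZero_of_notMem {v : V} (h : v ∉ V') : V'.extendByZero ρ v = 0 :=
  dif_neg h

variable [Algebra 𝔽 k]

theorem extendByZero_smul (hρ : IsReciprocal 𝔽 ρ) {v : V} (hv : v ≠ 0) {α : 𝔽} (hα : α ≠ 0) :
    V'.extendByZero ρ (α • v) = (algebraMap 𝔽 k α)⁻¹ * V'.extendByZero ρ v := by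
  by_cases h : v ∈ V'
  · rw [extendByZero_of_mem (V'.smul_mem α h), extendByZero_of_mem h]
    exact hρ.1 ⟨v, h⟩ (by simpa using hv) α hα
  · rw [extendByZero_of_notMem ((V'.smul_mem_iff hα).not.mpr h), extendByZero_of_notMem h,
      mul_zero]

theorem extendByZero_mul (hρ : IsReciprocal 𝔽 ρ) {v v' : V} (hv : v ≠ 0) (hv' : v' ≠ 0)
    (hvv' : v + v' ≠ 0) :
    V'.extendByZero ρ v * V'.extendByZero ρ v' =
      V'.extendByZero ρ (v + v') * (V'.extendByZero ρ v + V'.extendByZero ρ v') := by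
  by_cases h : v ∈ V' <;> by_cases h' : v' ∈ V'
  · rw [extendByZero_of_mem h, extendByZero_of_mem h', extendByZero_of_mem (V'.add_mem h h')]
    exact hρ.2 ⟨v, h⟩ ⟨v', h'⟩ (by simpa using hv) (by simpa using hv') (by simpa using hvv')
  -- If exactly one summand lies in `V'`, then `v + v'` does not, so both sides vanish.
  · rw [extendByZero_of_notMem h', extendByZero_of_notMem ((V'.add_mem_iff_right h).not.mpr h'),
      mul_zero, zero_mul]
  · rw [extendByZero_of_notMem h, extendByZero_of_notMem ((V'.add_mem_iff_left h').not.mpr h),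
      zero_mul, zero_mul]
  · rw [extendByZero_of_notMem h, extendByZero_of_notMem h', zero_mul, add_zero, mul_zero]

end Submodule

theorem IsReciprocal.extendByZero {𝔽 V k : Type*} [Field 𝔽] [AddCommGroup V] [Module 𝔽 V]
    [Field k] [Algebra 𝔽 k] {V' : Submodule 𝔽 V} {ρ : V' → k} (hρ : IsReciprocal 𝔽 ρ) :
    IsReciprocal 𝔽 (V'.extendByZero ρ) :=
  ⟨fun _ hv _ hα => V'.extendByZero_smul hρ hv hα,
    fun _ _ hv hv' hvv' => V'.extendByZero_mul hρ hv hv' hvv'⟩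

theorem extension_by_zero_reciprocal_general (𝔽 V k : Type*) [Field 𝔽]
    [AddCommGroup V] [Module 𝔽 V] [Field k] [Algebra 𝔽 k]
    (V' : Submodule 𝔽 V)
    (ρ : V' → k) (hρ : IsReciprocal 𝔽 ρ) :
    IsReciprocal 𝔽 (fun v : V =>
      open scoped Classical in if h : v ∈ V' then ρ ⟨v, h⟩ else 0) :=
  hρ.extendByZero

/-- If `V' ⊆ V` is a nonzero `𝔽_q`-subspace and `ρ : V' \ {0} → k` is a reciprocal map, then
the extension by zero `i_*ρ : V \ {0} → k` (equal to `ρ` on `V'` and `0` outside) is again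
a reciprocal map. -/
theorem extension_by_zero_reciprocal (𝔽 V k : Type*) [Field 𝔽] [Fintype 𝔽]
    [AddCommGroup V] [Module 𝔽 V] [FiniteDimensional 𝔽 V] [Field k] [Algebra 𝔽 k]
    (V' : Submodule 𝔽 V) (hV' : V' ≠ ⊥)
    (ρ : V' → k) (hρ : IsReciprocal 𝔽 ρ) :
    IsReciprocal 𝔽 (fun v : V =>
      open scoped Classical in if h : v ∈ V' then ρ ⟨v, h⟩ else 0) :=
  extension_by_zero_reciprocal_general 𝔽 V k V' ρ hρ
end

section
/- In the setting of Dickson invariants: writing k(T) := Π_{v ∈ V}(T − v) = T^{q^r} + Σ_{i=0}^{r-1} k_i T^{q^i} in S_V[T], the polynomial h(T) := Π_{v ∈ V, v≠0}(T − 1/v) over R_V satisfies h(T) = T^{q^r − 1} + Σ_{i=1}^r h_i T^{q^r − q^i}, where h_i = k_i/k_0 for 1 ≤ i ≤ r−1 and h_r = 1/k_0. -/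
/-!
Removing the root `0`, `k(T) = T · ∏_{v ≠ 0} (T − v)`, so the reversed polynomial of `k` is
`∏_{v ≠ 0} (1 − v T) = (∏_{v ≠ 0} (−v)) · h(T)`. Reversing the expansion of `k` instead gives
`1 + ∑ k_i T^{q^r − q^i}`, and the coefficient of `T` in `k` shows `k_0 = ∏_{v ≠ 0} (−v) ≠ 0`;
dividing by `k_0` gives the expansion of `h`.
-/

open MvPolynomial Polynomial

noncomputable section

/-- The fraction field `K_V` of the symmetric algebra of `V`. -/
abbrev KV (𝔽 : Type*) [Field 𝔽] (r : ℕ) := FractionRing (MvPolynomial (Fin r) 𝔽)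

/-- The embedding of `V = Fin r → 𝔽` (with basis the variables `X i`) into `K_V`. -/
def vecEmb (𝔽 : Type*) [Field 𝔽] (r : ℕ) (v : Fin r → 𝔽) : KV 𝔽 r :=
  algebraMap (MvPolynomial (Fin r) 𝔽) (KV 𝔽 r) (∑ i, MvPolynomial.C (v i) * X i)

namespace Polynomial

theorem reflect_sum {R ι : Type*} [Semiring R] (s : Finset ι) (f : ι → R[X]) (N : ℕ) :
    reflect N (∑ i ∈ s, f i) = ∑ i ∈ s, reflect N (f i) :=
  map_sum (⟨⟨reflect N, reflect_zero⟩, fun f g => reflect_add f g N⟩ : R[X] →+ R[X]) f s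

theorem reverse_prod {R ι : Type*} [CommSemiring R] [NoZeroDivisors R] (s : Finset ι)
    (f : ι → R[X]) : (∏ i ∈ s, f i).reverse = ∏ i ∈ s, (f i).reverse := by
  classical
  induction s using Finset.induction with
  | empty => simpa using reverse_C (1 : R)
  | insert _ _ h ih => rw [Finset.prod_insert h, Finset.prod_insert h, reverse_mul_of_domain, ih]

theorem reverse_X_sub_C {R : Type*} [CommRing R] [Nontrivial R] (a : R) :
    (X - C a).reverse = 1 - C a * X := by
  rw [reverse, natDegree_X_sub_C, reflect_sub, ← pow_one (X : R[X]), reflect_monomial,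
    reflect_C]
  simp

theorem reflect_X_pow_add_sum {R ι : Type*} [Semiring R] (s : Finset ι) (c : ι → R)
    (e : ι → ℕ) {n : ℕ} (he : ∀ i ∈ s, e i ≤ n) :
    reflect n (X ^ n + ∑ i ∈ s, C (c i) * X ^ e i) = 1 + ∑ i ∈ s, C (c i) * X ^ (n - e i) := by
  rw [reflect_add, reflect_monomial, revAt_le le_rfl, Nat.sub_self, pow_zero, reflect_sum]
  congr 1
  refine Finset.sum_congr rfl fun i hi => ?_
  rw [reflect_C_mul_X_pow, revAt_le (he i hi)]

theorem reverse_prod_X_sub_C {K ι : Type*} [Field K] (s : Finset ι) (a : ι → K)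
    (ha : ∀ i ∈ s, a i ≠ 0) :
    (∏ i ∈ s, (X - C (a i))).reverse = C (∏ i ∈ s, -a i) * ∏ i ∈ s, (X - C (a i)⁻¹) := by
  rw [reverse_prod, map_prod, ← Finset.prod_mul_distrib]
  refine Finset.prod_congr rfl fun i hi => ?_
  have hinv : C (a i) * C (a i)⁻¹ = 1 := by rw [← C_mul, mul_inv_cancel₀ (ha i hi), C_1]
  rw [reverse_X_sub_C, C_neg]
  linear_combination -hinv

section VanishingAtZero

variable {K V : Type*} [Field K] [Fintype V] [DecidableEq V] [Zero V] {f : V → K}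

theorem prod_X_sub_C_eq_X_mul (hf : f 0 = 0) :
    ∏ v, (X - C (f v)) = X * ∏ v : {v : V // v ≠ 0}, (X - C (f v)) := by
  rw [Fintype.prod_eq_mul_prod_subtype_ne _ 0, hf, map_zero, sub_zero]

theorem coeff_one_prod_X_sub_C (hf : f 0 = 0) :
    (∏ v, (X - C (f v))).coeff 1 = ∏ v : {v : V // v ≠ 0}, -f v := by
  rw [prod_X_sub_C_eq_X_mul hf, ← zero_add 1, coeff_X_mul, coeff_zero_eq_eval_zero, eval_prod]
  simp

theorem reverse_prod_X_sub_C_eq (hf : f 0 = 0) (hf₀ : ∀ v, v ≠ 0 → f v ≠ 0) :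
    (∏ v, (X - C (f v))).reverse
      = C (∏ v : {v : V // v ≠ 0}, -f v)
          * ∏ v : {v : V // v ≠ 0}, (X - C (f v)⁻¹) := by
  rw [prod_X_sub_C_eq_X_mul hf, reverse_X_mul]
  exact reverse_prod_X_sub_C _ _ fun v _ => hf₀ v v.2

end VanishingAtZero

theorem coeff_one_X_pow_add_sum_X_pow_pow {R : Type*} [Semiring R] {q r : ℕ} (hq : 1 < q)
    (hr : 0 < r) (c : Fin r → R) :
    (X ^ (q ^ r) + ∑ i : Fin r, C (c i) * X ^ (q ^ (i : ℕ))).coeff 1 = c ⟨0, hr⟩ := by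
  rw [coeff_add, coeff_X_pow, if_neg (by simp [eq_comm, hq.ne', hr.ne']), zero_add,
    finsetSum_coeff, Finset.sum_eq_single ⟨0, hr⟩]
  · simp
  · intro i _ hi
    rw [coeff_C_mul_X_pow, if_neg]
    rw [eq_comm, Nat.pow_eq_one, or_iff_right hq.ne']
    exact fun h => hi (Fin.ext h)
  · simp

end Polynomial

theorem smul_sum_dickson_quotients {K M : Type*} [Field K] [AddCommGroup M] [Module K M]
    {r : ℕ} (hr : 0 < r) (k : Fin r → K) (hk : k ⟨0, hr⟩ ≠ 0) (e : ℕ → M) :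
    k ⟨0, hr⟩ • (e 0 + ∑ i : Fin r,
        (if h : (i : ℕ) + 1 < r then k ⟨(i : ℕ) + 1, h⟩ / k ⟨0, hr⟩ else (k ⟨0, hr⟩)⁻¹)
          • e ((i : ℕ) + 1))
      = e r + ∑ i : Fin r, k i • e i := by
  obtain ⟨s, rfl⟩ : ∃ s, r = s + 1 := ⟨r - 1, by omega⟩
  rw [Fin.sum_univ_castSucc, Fin.sum_univ_succ]
  simp only [Fin.val_castSucc, Fin.val_last, add_lt_add_iff_right, Fin.is_lt, dite_true,
    lt_irrefl, dite_false, smul_add, Finset.smul_sum, smul_smul, mul_div_cancel₀ _ hk,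
    mul_inv_cancel₀ hk, one_smul]
  conv_lhs => rw [← add_assoc, add_comm]
  rfl

theorem vecEmb_zero (𝔽 : Type*) [Field 𝔽] (r : ℕ) : vecEmb 𝔽 r 0 = 0 := by
  simp [vecEmb]

theorem vecEmb_ne_zero (𝔽 : Type*) [Field 𝔽] (r : ℕ) {v : Fin r → 𝔽} (hv : v ≠ 0) :
    vecEmb 𝔽 r v ≠ 0 := by
  obtain ⟨i, hi⟩ := Function.ne_iff.mp hv
  rw [vecEmb, ne_eq, map_eq_zero_iff _ (IsFractionRing.injective _ _)]
  intro h
  have hcoord : MvPolynomial.eval (Pi.single i 1) (∑ j, MvPolynomial.C (v j) * X j) = v i := by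
    simp [Pi.single_apply]
  rw [h, map_zero] at hcoord
  exact hi hcoord.symm

open scoped Classical in
/-- Dickson invariants: writing `k(T) = ∏_{v ∈ V}(T − v) = T^{q^r} + ∑_{i<r} k_i T^{q^i}`, the
polynomial `h(T) = ∏_{0 ≠ v ∈ V}(T − 1/v)` satisfies
`h(T) = T^{q^r−1} + ∑_{i=1}^r h_i T^{q^r−q^i}` with `h_i = k_i/k_0` for `1 ≤ i ≤ r−1` and
`h_r = 1/k_0`. -/
theorem reciprocal_dickson (𝔽 : Type*) [Field 𝔽] [Fintype 𝔽] (q r : ℕ)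
    (hq : q = Fintype.card 𝔽) (hr : 0 < r) (kc : Fin r → KV 𝔽 r)
    (hk : (∏ v : Fin r → 𝔽, (Polynomial.X - Polynomial.C (vecEmb 𝔽 r v)))
        = Polynomial.X ^ (q ^ r)
          + ∑ i : Fin r, Polynomial.C (kc i) * Polynomial.X ^ (q ^ (i : ℕ))) :
    (∏ v : {v : Fin r → 𝔽 // v ≠ 0}, (Polynomial.X - Polynomial.C (vecEmb 𝔽 r v)⁻¹))
      = Polynomial.X ^ (q ^ r - 1)
        + ∑ i : Fin r,
            Polynomial.C
              (if h : (i : ℕ) + 1 < r then kc ⟨(i : ℕ) + 1, h⟩ / kc ⟨0, hr⟩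
               else (kc ⟨0, hr⟩)⁻¹)
              * Polynomial.X ^ (q ^ r - q ^ ((i : ℕ) + 1)) := by
  have hq₁ : 1 < q := hq ▸ Fintype.one_lt_card
  have hk₀ : kc ⟨0, hr⟩ = ∏ v : {v : Fin r → 𝔽 // v ≠ 0}, -vecEmb 𝔽 r v := by
    rw [← coeff_one_X_pow_add_sum_X_pow_pow hq₁ hr kc, ← hk,
      coeff_one_prod_X_sub_C (vecEmb_zero 𝔽 r)]
  have hk₀_ne : kc ⟨0, hr⟩ ≠ 0 := by
    rw [hk₀]
    exact Finset.prod_ne_zero_iff.2 fun v _ => neg_ne_zero.2 (vecEmb_ne_zero 𝔽 r v.2)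
  have hreverse := (reverse_prod_X_sub_C_eq (vecEmb_zero 𝔽 r)
    fun _ hv => vecEmb_ne_zero 𝔽 r hv).symm
  rw [← hk₀, reverse, natDegree_finsetProd_X_sub_C_eq_card, Finset.card_univ,
    Fintype.card_fun, Fintype.card_fin, ← hq, hk,
    reflect_X_pow_add_sum _ _ _ fun i _ => Nat.pow_le_pow_right hq₁.le i.2.le] at hreverse
  refine mul_left_cancel₀ (Polynomial.C_ne_zero.2 hk₀_ne) ?_
  have hshift := smul_sum_dickson_quotients (M := (KV 𝔽 r)[X]) hr kc hk₀_ne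
    fun j => Polynomial.X ^ (q ^ r - q ^ j)
  simp only [pow_zero, Nat.sub_self] at hshift
  rw [hreverse]
  simpa only [Polynomial.C_mul'] using hshift.symm

end
end

section
/- Let V be an F_q-vector space of dimension r and V* its dual. For a reciprocal map ρ: V \ {0} → k into a field k, the map g_V(ρ): V* → k defined by g_V(ρ)(ℓ) = Σ_{v ≠ 0, ⟨ℓ,v⟩ = 1} ρ(v) is F_q-linear. -/
open Finset

section

variable {𝔽 V k : Type*} [Field 𝔽] [AddCommGroup V] [Module 𝔽 V] [Fintype V]
  [Field k] [Algebra 𝔽 k]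

lemma isLinearMap_sum_algebraMap_apply_mul (ρ : V → k) :
    IsLinearMap 𝔽 (fun ℓ : Module.Dual 𝔽 V => ∑ v, algebraMap 𝔽 k (ℓ v) * ρ v) where
  map_add ℓ ℓ' := by simp only [LinearMap.add_apply, map_add, add_mul, sum_add_distrib]
  map_smul α ℓ := by
    simp only [LinearMap.smul_apply, smul_eq_mul, map_mul, Algebra.smul_def, mul_sum, mul_assoc]

variable [DecidableEq 𝔽] {ρ : V → k}
  (hρ : ∀ v : V, v ≠ 0 → ∀ α : 𝔽, α ≠ 0 → ρ (α • v) = (algebraMap 𝔽 k α)⁻¹ * ρ v)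
include hρ

lemma sum_fiber_eq_inv_mul_sum_fiber_one (ℓ : Module.Dual 𝔽 V) {c : 𝔽} (hc : c ≠ 0) :
    ∑ v with ℓ v = c, ρ v = (algebraMap 𝔽 k c)⁻¹ * ∑ v with ℓ v = 1, ρ v := by
  rw [mul_sum]
  symm
  refine sum_nbij' (c • ·) (c⁻¹ • ·) (by simp_all) (by simp_all) (by simp [smul_smul, hc])
    (by simp [smul_smul, hc]) fun v hv => ?_
  have hv0 : v ≠ 0 := by
    rintro rfl
    simp at hv
  exact (hρ v hv0 c hc).symm

variable [Fintype 𝔽]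

lemma sum_algebraMap_apply_mul_eq_neg (ℓ : Module.Dual 𝔽 V) :
    ∑ v, algebraMap 𝔽 k (ℓ v) * ρ v = -∑ v with ℓ v = 1, ρ v := by
  set g := ∑ v with ℓ v = 1, ρ v
  have hfiber (c : 𝔽) :
      ∑ v with ℓ v = c, algebraMap 𝔽 k (ℓ v) * ρ v = g - if c = 0 then g else 0 := by
    rw [sum_congr rfl fun v hv => by rw [(mem_filter.mp hv).2], ← mul_sum]
    rcases eq_or_ne c 0 with rfl | hc
    · simp
    · rw [sum_fiber_eq_inv_mul_sum_fiber_one hρ ℓ hc, ← mul_assoc,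
        mul_inv_cancel₀ ((map_ne_zero _).mpr hc), one_mul, if_neg hc, sub_zero]
  have hcard : (Fintype.card 𝔽 : k) = 0 := by
    rw [← map_natCast (algebraMap 𝔽 k), FiniteField.cast_card_eq_zero, map_zero]
  rw [← sum_fiberwise univ ℓ, sum_congr rfl fun c _ => hfiber c, sum_sub_distrib, sum_const,
    sum_ite_eq' univ (0 : 𝔽), if_pos (mem_univ _), card_univ, nsmul_eq_mul, hcard, zero_mul,
    zero_sub]

end

/-- For a reciprocal map `ρ : V \ {0} → k`, the map
`g_V(ρ) : V* → k`, `ℓ ↦ ∑_{v ≠ 0, ⟨ℓ,v⟩ = 1} ρ(v)` is `𝔽_q`-linear. -/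
theorem gV_linear (𝔽 V k : Type*) [Field 𝔽] [Fintype 𝔽]
    [AddCommGroup V] [Module 𝔽 V] [FiniteDimensional 𝔽 V] [Field k] [Algebra 𝔽 k]
    (ρ : V → k) (hρ : IsReciprocal 𝔽 ρ) :
    IsLinearMap 𝔽 (fun ℓ : Module.Dual 𝔽 V =>
      ∑ᶠ v ∈ {v : V | v ≠ 0 ∧ ℓ v = 1}, ρ v) := by
  classical
  have : Finite V := Module.finite_of_finite 𝔽
  let : Fintype V := Fintype.ofFinite V
  have hg (ℓ : Module.Dual 𝔽 V) :
      ∑ᶠ v ∈ {v : V | v ≠ 0 ∧ ℓ v = 1}, ρ v = ∑ v, algebraMap 𝔽 k (ℓ v) * -ρ v := by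
    have hset : {v : V | v ≠ 0 ∧ ℓ v = 1} = ↑(univ.filter fun v : V => ℓ v = 1) := by
      ext v
      simp only [Set.mem_ofPred_eq, coe_filter, mem_univ, true_and, and_iff_right_iff_imp]
      rintro h rfl
      simp at h
    simp only [hset, finsum_mem_coe_finset, mul_neg, sum_neg_distrib,
      sum_algebraMap_apply_mul_eq_neg hρ.1, neg_neg]
  simpa only [hg, Pi.neg_apply] using isLinearMap_sum_algebraMap_apply_mul (𝔽 := 𝔽) (-ρ)
end

section
/- Let λ: V* → k be an F_q-linear map into a field k of characteristic char(F_q), and define f_V(λ)(v) := Π_{ℓ ∈ V*, ⟨ℓ,v⟩=1} λ(ℓ) for nonzero v ∈ V. Then f_V(λ) satisfies f_V(λ)(αv) = α^{-1}·f_V(λ)(v) for all α ∈ F_q^×, i.e., the scaling axiom of a reciprocal map. -/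
/-!
The functionals `ℓ` with `ℓ (α • v) = 1` are exactly `α⁻¹ • ℓ` for `ℓ v = 1`, so by linearity of
`λ` each factor of the product picks up `α⁻¹`, once for each of the `q ^ (r - 1)` points of the
affine hyperplane `{ℓ | ℓ v = 1}` of `V*`. Since `α ∈ 𝔽_q`, `α⁻¹ ^ q ^ (r - 1) = α⁻¹`.
-/

open Pointwise

theorem LinearMap.card_fiber_eq_pow_finrank_ker {K M N : Type*} [Field K] [Fintype K]
    [AddCommGroup M] [Module K M] [FiniteDimensional K M] [AddCommGroup N] [Module K N]
    (f : M →ₗ[K] N) (x : M) :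
    Nat.card (f ⁻¹' {f x}) = Fintype.card K ^ Module.finrank K (LinearMap.ker f) := by
  have : Finite M := Module.finite_of_finite K
  cases nonempty_fintype (LinearMap.ker f)
  rw [← Module.card_eq_pow_finrank, ← Nat.card_eq_fintype_card]
  exact Nat.card_congr (f.toAddMonoidHom.fiberEquivKer x)

theorem Module.Dual.ncard_setOf_apply_eq_one {K V : Type*} [Field K] [Fintype K]
    [AddCommGroup V] [Module K V] [FiniteDimensional K V] {v : V} (hv : v ≠ 0) :
    {ℓ : Module.Dual K V | ℓ v = 1}.ncard = Fintype.card K ^ (Module.finrank K V - 1) := by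
  obtain ⟨ℓ₀, hℓ₀⟩ := Module.Projective.exists_dual_eq_one K hv
  let ev : Module.Dual K V →ₗ[K] K := LinearMap.applyₗ v
  have hfiber : {ℓ : Module.Dual K V | ℓ v = 1} = ev ⁻¹' {ev ℓ₀} := by
    ext ℓ
    simp [ev, hℓ₀]
  have hev : Function.Surjective ev := fun c => ⟨c • ℓ₀, by simp [ev, hℓ₀]⟩
  have hker : Module.finrank K (LinearMap.ker ev) = Module.finrank K V - 1 := by
    have := ev.finrank_range_add_finrank_ker
    rw [LinearMap.range_eq_top.mpr hev, finrank_top, Module.finrank_self,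
      Subspace.dual_finrank_eq] at this
    omega
  rw [hfiber, ← Nat.card_coe_set_eq, ev.card_fiber_eq_pow_finrank_ker, hker]

theorem Module.Dual.setOf_apply_smul_eq_one {K V : Type*} [Field K] [AddCommGroup V]
    [Module K V] (v : V) {α : K} (hα : α ≠ 0) :
    {ℓ : Module.Dual K V | ℓ (α • v) = 1} = α⁻¹ • {ℓ | ℓ v = 1} := by
  ext ℓ
  simp [Set.mem_smul_set_iff_inv_smul_mem₀ (inv_ne_zero hα)]

theorem finprod_mem_const_eq_pow_ncard {α M : Type*} [CommMonoid M] {S : Set α} (hS : S.Finite)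
    (a : M) : ∏ᶠ _ ∈ S, a = a ^ S.ncard := by
  rw [finprod_mem_eq_finite_toFinset_prod _ hS, Finset.prod_const, Set.ncard_eq_toFinset_card _ hS]

theorem LinearMap.finprod_mem_smul_set {K M A : Type*} [Field K] [AddCommGroup M] [Module K M]
    [CommSemiring A] [Algebra K A] (l : M →ₗ[K] A) {S : Set M} (hS : S.Finite) {c : K}
    (hc : c ≠ 0) : ∏ᶠ x ∈ c • S, l x = algebraMap K A c ^ S.ncard * ∏ᶠ x ∈ S, l x := by
  rw [← Set.image_smul, finprod_mem_image (MulAction.injective₀ hc).injOn]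
  simp only [map_smul, Algebra.smul_def]
  rw [finprod_mem_mul_distrib hS, finprod_mem_const_eq_pow_ncard hS]

/-- For an `𝔽_q`-linear map `λ : V* → k` into a field `k`, the map
`f_V(λ) : V \ {0} → k`, `v ↦ ∏_{ℓ ∈ V*, ⟨ℓ,v⟩ = 1} λ(ℓ)` satisfies the scaling axiom of a
reciprocal map: `f_V(λ)(αv) = α⁻¹ · f_V(λ)(v)` for all `α ∈ 𝔽_q^×` and nonzero `v`. -/
theorem fV_scaling (𝔽 V k : Type*) [Field 𝔽] [Fintype 𝔽]
    [AddCommGroup V] [Module 𝔽 V] [FiniteDimensional 𝔽 V] [Field k] [Algebra 𝔽 k]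
    (l : Module.Dual 𝔽 V →ₗ[𝔽] k) (v : V) (hv : v ≠ 0) (α : 𝔽) (hα : α ≠ 0) :
    (∏ᶠ ℓ ∈ {ℓ : Module.Dual 𝔽 V | ℓ (α • v) = 1}, l ℓ)
      = (algebraMap 𝔽 k α)⁻¹ * ∏ᶠ ℓ ∈ {ℓ : Module.Dual 𝔽 V | ℓ v = 1}, l ℓ := by
  have : Finite (Module.Dual 𝔽 V) := Module.finite_of_finite 𝔽
  rw [Module.Dual.setOf_apply_smul_eq_one v hα,
    l.finprod_mem_smul_set (Set.toFinite _) (inv_ne_zero hα),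
    Module.Dual.ncard_setOf_apply_eq_one hv, ← map_pow, FiniteField.pow_card_pow, map_inv₀]
end
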